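/- The best optimal value of the interval transportation problem equals the optimal value of a single linear program: inf { f(c,s,d) : c ∈ [c̲,c̄], s ∈ [s̲,s̄], d ∈ [d̲,d̄] } = inf { ∑_{i,j} c̲_{ij} x_{ij} : x ≥ 0, ∑_j x_{ij} ≤ s̄_i ∀i, d̲_j ≤ ∑_i x_{ij} ≤ d̄_j ∀j }, provided the interval problem is weakly feasible. -/

import Mathlib

/-!
Both sides are infima of transportation costs over the same plans. A plan `x` of the relaxed
program is feasible for the scenario `(c̲, s̄, d)` with `d` its own column sums, so the left side
is at most its `c̲`-cost. Conversely a plan feasible for some scenario `(c, s, d)` is feasible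
for the relaxed program, and its `c̲`-cost is at most its `c`-cost since `x ≥ 0`.
-/

open Finset

def Feas {m n : ℕ} (s : Fin m → ℝ) (d : Fin n → ℝ) (x : Fin m → Fin n → ℝ) : Prop :=
  (∀ i j, 0 ≤ x i j) ∧ (∀ i, ∑ j, x i j ≤ s i) ∧ (∀ j, ∑ i, x i j = d j)

def IsOptimal {m n : ℕ} (c : Fin m → Fin n → ℝ) (s : Fin m → ℝ) (d : Fin n → ℝ)
    (x : Fin m → Fin n → ℝ) : Prop :=
  Feas s d x ∧ ∀ x', Feas s d x' → ∑ i, ∑ j, c i j * x i j ≤ ∑ i, ∑ j, c i j * x' i j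

noncomputable def optVal {m n : ℕ} (c : Fin m → Fin n → ℝ) (s : Fin m → ℝ) (d : Fin n → ℝ) : EReal :=
  sInf ((fun x => ((∑ i, ∑ j, c i j * x i j : ℝ) : EReal)) '' {x | Feas s d x})

variable {m n : ℕ}

lemma Feas.mono_supply {s s' : Fin m → ℝ} {d : Fin n → ℝ} {x : Fin m → Fin n → ℝ}
    (hx : Feas s d x) (hs : s ≤ s') : Feas s' d x :=
  ⟨hx.1, fun i => (hx.2.1 i).trans (hs i), hx.2.2⟩

lemma feas_columnSums {s : Fin m → ℝ} {x : Fin m → Fin n → ℝ}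
    (hx0 : ∀ i j, 0 ≤ x i j) (hxs : ∀ i, ∑ j, x i j ≤ s i) :
    Feas s (fun j => ∑ i, x i j) x :=
  ⟨hx0, hxs, fun _ => rfl⟩

lemma optVal_le_of_feas {c : Fin m → Fin n → ℝ} {s : Fin m → ℝ} {d : Fin n → ℝ}
    {x : Fin m → Fin n → ℝ} (hx : Feas s d x) :
    optVal c s d ≤ ((∑ i, ∑ j, c i j * x i j : ℝ) : EReal) :=
  sInf_le ⟨x, hx, rfl⟩

lemma cost_mono {c c' x : Fin m → Fin n → ℝ} (hc : c ≤ c') (hx0 : ∀ i j, 0 ≤ x i j) :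
    ∑ i, ∑ j, c i j * x i j ≤ ∑ i, ∑ j, c' i j * x i j :=
  sum_le_sum fun i _ => sum_le_sum fun j _ => mul_le_mul_of_nonneg_right (hc i j) (hx0 i j)

theorem stmt_13_general {m n : ℕ} (clo chi : Fin m → Fin n → ℝ) (slo shi : Fin m → ℝ)
    (dlo dhi : Fin n → ℝ)
    (hc : clo ≤ chi)
    (hs : slo ≤ shi) :
    sInf {v : EReal | ∃ c s d, clo ≤ c ∧ c ≤ chi ∧ slo ≤ s ∧ s ≤ shi ∧
        dlo ≤ d ∧ d ≤ dhi ∧ v = optVal c s d} =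
      sInf ((fun x => ((∑ i, ∑ j, clo i j * x i j : ℝ) : EReal)) ''
        {x : Fin m → Fin n → ℝ | (∀ i j, 0 ≤ x i j) ∧ (∀ i, ∑ j, x i j ≤ shi i) ∧
          (∀ j, dlo j ≤ ∑ i, x i j ∧ ∑ i, x i j ≤ dhi j)}) := by
  apply le_antisymm
  · refine le_sInf ?_
    rintro _ ⟨x, ⟨hx0, hxs, hxd⟩, rfl⟩
    have hscenario : optVal clo shi (fun j => ∑ i, x i j) ∈ {v : EReal | ∃ c s d, clo ≤ c ∧
        c ≤ chi ∧ slo ≤ s ∧ s ≤ shi ∧ dlo ≤ d ∧ d ≤ dhi ∧ v = optVal c s d} :=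
      ⟨clo, shi, _, le_rfl, hc, hs, le_rfl, fun j => (hxd j).1, fun j => (hxd j).2, rfl⟩
    exact le_trans (sInf_le hscenario) (optVal_le_of_feas (feas_columnSums hx0 hxs))
  · refine le_sInf ?_
    rintro _ ⟨c, s, d, hclo, -, -, hshi, hdlo, hdhi, rfl⟩
    refine le_sInf ?_
    rintro _ ⟨x, hx, rfl⟩
    obtain ⟨hx0, hxs, hxd⟩ := Feas.mono_supply hx hshi
    have hrelaxed : (∀ i j, 0 ≤ x i j) ∧ (∀ i, ∑ j, x i j ≤ shi i) ∧
        (∀ j, dlo j ≤ ∑ i, x i j ∧ ∑ i, x i j ≤ dhi j) :=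
      ⟨hx0, hxs, fun j => ⟨hxd j ▸ hdlo j, hxd j ▸ hdhi j⟩⟩
    exact le_trans (sInf_le ⟨x, hrelaxed, rfl⟩) (EReal.coe_le_coe (cost_mono hclo hx0))

theorem stmt_13 {m n : ℕ} (clo chi : Fin m → Fin n → ℝ) (slo shi : Fin m → ℝ)
    (dlo dhi : Fin n → ℝ)
    (hc0 : ∀ i j, 0 ≤ clo i j) (hc : clo ≤ chi)
    (hs0 : 0 ≤ slo) (hs : slo ≤ shi) (hd0 : 0 ≤ dlo) (hd : dlo ≤ dhi)
    (hwf : ∑ j, dlo j ≤ ∑ i, shi i) :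
    sInf {v : EReal | ∃ c s d, clo ≤ c ∧ c ≤ chi ∧ slo ≤ s ∧ s ≤ shi ∧
        dlo ≤ d ∧ d ≤ dhi ∧ v = optVal c s d} =
      sInf ((fun x => ((∑ i, ∑ j, clo i j * x i j : ℝ) : EReal)) ''
        {x : Fin m → Fin n → ℝ | (∀ i j, 0 ≤ x i j) ∧ (∀ i, ∑ j, x i j ≤ shi i) ∧
          (∀ j, dlo j ≤ ∑ i, x i j ∧ ∑ i, x i j ≤ dhi j)}) :=
  stmt_13_general clo chi slo shi dlo dhi hc hs
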